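/- arXiv:math/0506032 — 4 statements merged into one kernel-verified Lean document; each statement's English description precedes it below -/
import Mathlib

section
/- Localisation of the maximal function: there is a constant K₀ depending only on the dimension n such that the following holds. For every locally integrable function f on ℝⁿ, every cube Q and every λ > 0 for which there exists a point x̄ ∈ 4Q with Mf(x̄) ≤ λ, one has, for every K ≥ K₀, the inclusion {x ∈ Q : Mf(x) > Kλ} ⊆ {x : M(f·1_{8Q})(x) > (K/K₀)λ}. -/
open MeasureTheory ENNReal

noncomputable section

/-- Axis-parallel closed cube with center `c` and sidelength `ℓ`. -/
def cube {n : ℕ} (c : EuclideanSpace ℝ (Fin n)) (ℓ : ℝ) : Set (EuclideanSpace ℝ (Fin n)) :=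
  {x | ∀ i, |x i - c i| ≤ ℓ / 2}

/-- The uncentered Hardy–Littlewood maximal operator over axis-parallel cubes,
with values in `ℝ≥0∞`. -/
noncomputable def Mmax {n : ℕ} (f : EuclideanSpace ℝ (Fin n) → ℝ)
    (x : EuclideanSpace ℝ (Fin n)) : ℝ≥0∞ :=
  ⨆ (c : EuclideanSpace ℝ (Fin n)) (ℓ : ℝ) (_ : 0 < ℓ) (_ : x ∈ cube c ℓ),
    (volume (cube c ℓ))⁻¹ * ∫⁻ y in cube c ℓ, (‖f y‖₊ : ℝ≥0∞)

/-!
Take `K₀ = 3ⁿ`, let `x ∈ Q` and let `R ∋ x` be a cube on which the average of `|f|`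
exceeds `Kλ`. If the side of `R` is at most three times that of `Q`, then `R ⊆ 8Q`, so the same
average is an average of `f·1_{8Q}`. Otherwise `3R ⊇ 4Q ∋ x̄`, and the average over `R` is at most
`3ⁿ` times the average over `3R`, hence at most `3ⁿ Mf(x̄) ≤ 3ⁿ λ ≤ Kλ`, which is impossible.
-/

section Cubes

variable {n : ℕ}

lemma cube_eq_preimage (c : EuclideanSpace ℝ (Fin n)) (ℓ : ℝ) :
    cube c ℓ = (MeasurableEquiv.toLp 2 (Fin n → ℝ)).symm ⁻¹'
      Set.univ.pi fun i => Set.Icc (c i - ℓ / 2) (c i + ℓ / 2) := by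
  ext x
  simp only [cube, Set.mem_ofPred_eq, Set.mem_preimage, Set.mem_univ_pi, Set.mem_Icc, abs_le,
    MeasurableEquiv.coe_toLp_symm]
  exact forall_congr' fun i => by constructor <;> rintro ⟨h₁, h₂⟩ <;> constructor <;> linarith

lemma measurableSet_cube (c : EuclideanSpace ℝ (Fin n)) (ℓ : ℝ) :
    MeasurableSet (cube c ℓ) := by
  rw [cube_eq_preimage]
  exact (MeasurableEquiv.toLp 2 (Fin n → ℝ)).symm.measurable
    (MeasurableSet.univ_pi fun _ => measurableSet_Icc)

lemma volume_cube (c : EuclideanSpace ℝ (Fin n)) (ℓ : ℝ) :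
    volume (cube c ℓ) = ENNReal.ofReal ℓ ^ n := by
  rw [cube_eq_preimage,
    (EuclideanSpace.volume_preserving_symm_measurableEquiv_toLp (Fin n)).measure_preimage
      (MeasurableSet.univ_pi fun _ => measurableSet_Icc).nullMeasurableSet, volume_pi_pi]
  simp only [Real.volume_Icc, add_sub_sub_cancel, add_halves, Finset.prod_const,
    Finset.card_univ, Fintype.card_fin]

lemma cube_mono (c : EuclideanSpace ℝ (Fin n)) {ℓ ℓ' : ℝ} (h : ℓ ≤ ℓ') :
    cube c ℓ ⊆ cube c ℓ' :=
  fun _ hy i => (hy i).trans (by linarith)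

lemma cube_subset_cube_of_mem {x c d : EuclideanSpace ℝ (Fin n)} {a b : ℝ}
    (hxc : x ∈ cube c a) (hxd : x ∈ cube d b) (e : ℝ) :
    cube c e ⊆ cube d (a + b + e) := by
  intro y hy i
  calc |y i - d i| ≤ |y i - c i| + (|c i - x i| + |x i - d i|) :=
        (abs_sub_le _ (c i) _).trans (by gcongr; exact abs_sub_le _ (x i) _)
      _ ≤ e / 2 + (a / 2 + b / 2) := by
        gcongr
        exacts [hy i, abs_sub_comm (x i) (c i) ▸ hxc i, hxd i]
      _ = (a + b + e) / 2 := by ring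

end Cubes

def cubeAvg {n : ℕ} (f : EuclideanSpace ℝ (Fin n) → ℝ) (c : EuclideanSpace ℝ (Fin n)) (ℓ : ℝ) :
    ℝ≥0∞ :=
  (volume (cube c ℓ))⁻¹ * ∫⁻ y in cube c ℓ, (‖f y‖₊ : ℝ≥0∞)

section Averages

variable {n : ℕ} {f : EuclideanSpace ℝ (Fin n) → ℝ} {x c : EuclideanSpace ℝ (Fin n)} {ℓ : ℝ}

lemma cubeAvg_le_Mmax (hℓ : 0 < ℓ) (hx : x ∈ cube c ℓ) : cubeAvg f c ℓ ≤ Mmax f x :=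
  le_iSup_of_le c <| le_iSup_of_le ℓ <| le_iSup_of_le hℓ <| le_iSup_of_le hx le_rfl

lemma exists_cubeAvg_gt_of_lt_Mmax {t : ℝ≥0∞} (h : t < Mmax f x) :
    ∃ c ℓ, 0 < ℓ ∧ x ∈ cube c ℓ ∧ t < cubeAvg f c ℓ := by
  simpa only [Mmax, cubeAvg, lt_iSup_iff, exists_prop] using h

lemma cubeAvg_indicator_of_subset {E : Set (EuclideanSpace ℝ (Fin n))} (hE : cube c ℓ ⊆ E) :
    cubeAvg (E.indicator f) c ℓ = cubeAvg f c ℓ := by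
  unfold cubeAvg
  congr 1
  exact setLIntegral_congr_fun (measurableSet_cube c ℓ) fun y hy => by
    rw [Set.indicator_of_mem (hE hy)]

lemma cubeAvg_le_pow_mul_cubeAvg (hℓ : 0 ≤ ℓ) {t : ℝ} (ht : 1 ≤ t) :
    cubeAvg f c ℓ ≤ ENNReal.ofReal t ^ n * cubeAvg f c (t * ℓ) := by
  have ht0 : ENNReal.ofReal t ^ n ≠ 0 := pow_ne_zero _ (ENNReal.ofReal_pos.2 (by linarith)).ne'
  have htop : ENNReal.ofReal t ^ n ≠ ⊤ := pow_ne_top ofReal_ne_top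
  rw [cubeAvg, cubeAvg, volume_cube, volume_cube, ENNReal.ofReal_mul (by linarith), mul_pow,
    ENNReal.mul_inv (.inl ht0) (.inl htop), mul_assoc, ← mul_assoc, ENNReal.mul_inv_cancel ht0 htop,
    one_mul]
  gcongr
  exact cube_mono c (le_mul_of_one_le_left hℓ ht)

lemma cubeAvg_le_pow_mul_Mmax {y : EuclideanSpace ℝ (Fin n)} (hℓ : 0 < ℓ) {t : ℝ} (ht : 1 ≤ t)
    (hy : y ∈ cube c (t * ℓ)) :
    cubeAvg f c ℓ ≤ ENNReal.ofReal t ^ n * Mmax f y :=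
  (cubeAvg_le_pow_mul_cubeAvg hℓ.le ht).trans <|
    mul_le_mul_right (cubeAvg_le_Mmax (by positivity) hy) _

end Averages

theorem maximal_function_localisation_general (n : ℕ) :
    ∃ K₀ : ℝ, 0 < K₀ ∧
      ∀ f : EuclideanSpace ℝ (Fin n) → ℝ, LocallyIntegrable f volume →
      ∀ (c : EuclideanSpace ℝ (Fin n)) (ℓ : ℝ), 0 < ℓ →
      ∀ lam : ℝ, 0 < lam →
      (∃ xbar ∈ cube c (4 * ℓ), Mmax f xbar ≤ ENNReal.ofReal lam) →
      ∀ K : ℝ, K₀ ≤ K →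
        {x | x ∈ cube c ℓ ∧ ENNReal.ofReal (K * lam) < Mmax f x} ⊆
          {x | ENNReal.ofReal (K / K₀ * lam) <
            Mmax ((cube c (8 * ℓ)).indicator f) x} := by
  refine ⟨3 ^ n, by positivity, ?_⟩
  intro f _ c ℓ hℓ lam hlam ⟨xbar, hxbar, hMxbar⟩ K hK x ⟨hxQ, hKx⟩
  obtain ⟨d, s, hs, hxR, hKavg⟩ := exists_cubeAvg_gt_of_lt_Mmax hKx
  by_cases hsℓ : s ≤ 3 * ℓ
  · have hR : cube d s ⊆ cube c (8 * ℓ) :=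
      (cube_subset_cube_of_mem hxR hxQ s).trans (cube_mono c (by linarith))
    calc ENNReal.ofReal (K / 3 ^ n * lam) ≤ ENNReal.ofReal (K * lam) := by
          gcongr
          exact div_le_self ((by positivity : (0 : ℝ) ≤ 3 ^ n).trans hK) (one_le_pow₀ (by norm_num))
      _ < cubeAvg f d s := hKavg
      _ = cubeAvg ((cube c (8 * ℓ)).indicator f) d s := (cubeAvg_indicator_of_subset hR).symm
      _ ≤ _ := cubeAvg_le_Mmax hs hxR
  · have hxbar3R : xbar ∈ cube d (3 * s) :=
      cube_mono d (by linarith) (cube_subset_cube_of_mem hxQ hxR (4 * ℓ) hxbar)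
    refine absurd ?_ (lt_irrefl (ENNReal.ofReal (K * lam)))
    calc ENNReal.ofReal (K * lam) < cubeAvg f d s := hKavg
      _ ≤ ENNReal.ofReal 3 ^ n * Mmax f xbar := cubeAvg_le_pow_mul_Mmax hs (by norm_num) hxbar3R
      _ ≤ ENNReal.ofReal 3 ^ n * ENNReal.ofReal lam := by gcongr
      _ = ENNReal.ofReal (3 ^ n * lam) := by
          rw [ENNReal.ofReal_mul (by positivity), ENNReal.ofReal_pow (by norm_num)]
      _ ≤ ENNReal.ofReal (K * lam) := by gcongr

/-- Localisation of the maximal function: there is `K₀`, depending only on the dimension `n`,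
such that for every locally integrable `f`, every cube `Q` and every `λ > 0` for which some
`x̄ ∈ 4Q` satisfies `Mf(x̄) ≤ λ`, one has for every `K ≥ K₀` the inclusion
`{x ∈ Q : Mf(x) > Kλ} ⊆ {M(f·1_{8Q}) > (K/K₀)λ}`. -/
theorem maximal_function_localisation (n : ℕ) (hn : 1 ≤ n) :
    ∃ K₀ : ℝ, 0 < K₀ ∧
      ∀ f : EuclideanSpace ℝ (Fin n) → ℝ, LocallyIntegrable f volume →
      ∀ (c : EuclideanSpace ℝ (Fin n)) (ℓ : ℝ), 0 < ℓ →
      ∀ lam : ℝ, 0 < lam →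
      (∃ xbar ∈ cube c (4 * ℓ), Mmax f xbar ≤ ENNReal.ofReal lam) →
      ∀ K : ℝ, K₀ ≤ K →
        {x | x ∈ cube c ℓ ∧ ENNReal.ofReal (K * lam) < Mmax f x} ⊆
          {x | ENNReal.ofReal (K / K₀ * lam) <
            Mmax ((cube c (8 * ℓ)).indicator f) x} :=
  maximal_function_localisation_general n
end
end

section
/- Composition of off-diagonal estimates: let n ≥ 1 and 1 ≤ p ≤ q ≤ r ≤ ∞, and let (T_t)_{t>0} and (S_t)_{t>0} be families of bounded linear operators on L²(ℝⁿ). Suppose (T_t) satisfies L^p–L^q off-diagonal estimates: there are C₁, c₁ > 0 such that for all closed sets E, F ⊂ ℝⁿ, all t > 0, and all h ∈ L^p ∩ L² supported in E, ‖T_t h‖_{L^q(F)} ≤ C₁ t^{−γ_{pq}/2} e^{−c₁ d(E,F)²/t} ‖h‖_p; and suppose (S_t) satisfies L^q–L^r off-diagonal estimates with constants C₂, c₂, where in addition S_t is defined on L^q ∩ L². Then the family (S_t T_t)_{t>0} satisfies L^p–L^r off-diagonal estimates: there are C, c > 0, depending only on n, p, q, r, C₁, c₁, C₂, c₂, such that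 for all closed sets E, F, all t > 0, and all h ∈ L^p ∩ L² supported in E, ‖S_t T_t h‖_{L^r(F)} ≤ C t^{−γ_{pr}/2} e^{−c·d(E,F)²/t} ‖h‖_p. -/
/-!
Put `D = d(E,F)` and split `T_t h` along the open `D/2`-neighbourhood `U` of `E`. The part
supported in `U` lives in the closed `D/2`-neighbourhood of `E`, at distance `≥ D/2` from `F`, so
`S_t` supplies the Gaussian factor while `T_t` is only used through its global `L^p–L^q` bound.
The part supported off `U` is at distance `≥ D/2` from `E`, so `T_t` supplies the Gaussian factor.
Since `n/r ≤ n/q ≤ n/p`, the powers of `t` multiply to `t^{-γ_{pr}/2}`, and the constants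
`C = 2 C₁ C₂`, `c = min c₁ c₂ / 4` come out.
-/

open MeasureTheory ENNReal

noncomputable section

/-- The (Euclidean) distance between two sets, `d(E,F) = inf {dist x y : x ∈ E, y ∈ F}`. -/
noncomputable def setDist {n : ℕ} (E F : Set (EuclideanSpace ℝ (Fin n))) : ℝ :=
  sInf (Set.image2 dist E F)

open Metric

section SetDist

variable {n : ℕ} {E F : Set (EuclideanSpace ℝ (Fin n))} {x y : EuclideanSpace ℝ (Fin n)}

lemma setDist_nonneg (E F : Set (EuclideanSpace ℝ (Fin n))) : 0 ≤ setDist E F :=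
  Real.sInf_nonneg (by rintro _ ⟨x, _, y, _, rfl⟩; exact dist_nonneg)

lemma setDist_le_dist (hx : x ∈ E) (hy : y ∈ F) : setDist E F ≤ dist x y :=
  csInf_le ⟨0, by rintro _ ⟨x, _, y, _, rfl⟩; exact dist_nonneg⟩ (Set.mem_image2_of_mem hx hy)

lemma le_setDist {a : ℝ} (hE : E.Nonempty) (hF : F.Nonempty)
    (h : ∀ x ∈ E, ∀ y ∈ F, a ≤ dist x y) : a ≤ setDist E F :=
  le_csInf (hE.image2 hF) (by rintro _ ⟨x, hx, y, hy, rfl⟩; exact h x hx y hy)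

@[simp]
lemma setDist_empty_left : setDist (∅ : Set (EuclideanSpace ℝ (Fin n))) F = 0 := by
  simp [setDist]

@[simp]
lemma setDist_empty_right : setDist E (∅ : Set (EuclideanSpace ℝ (Fin n))) = 0 := by
  simp [setDist]

lemma setDist_le_infDist (hE : E.Nonempty) (hy : y ∈ F) : setDist E F ≤ infDist y E :=
  (le_infDist hE).2 fun z hz => by rw [dist_comm]; exact setDist_le_dist hz hy

lemma sub_le_setDist_cthickening {δ : ℝ} (hδ : 0 ≤ δ) (E F : Set (EuclideanSpace ℝ (Fin n))) :
    setDist E F - δ ≤ setDist (cthickening δ E) F := by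
  rcases E.eq_empty_or_nonempty with rfl | hE
  · simp only [cthickening_empty, setDist_empty_left]
    linarith
  rcases F.eq_empty_or_nonempty with rfl | hF
  · simp only [setDist_empty_right]
    linarith
  refine le_setDist (hE.mono (self_subset_cthickening E)) hF fun x hx y hy => ?_
  have hxE : infDist x E ≤ δ := toReal_le_of_le_ofReal hδ (mem_cthickening_iff.1 hx)
  have hyE : infDist y E ≤ infDist x E + dist y x := infDist_le_infDist_add_dist
  linarith [setDist_le_infDist hE hy, dist_comm x y]

lemma le_setDist_compl_thickening {δ : ℝ} (hδ : δ ≤ setDist E F) :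
    δ ≤ setDist E (thickening δ E)ᶜ := by
  have hF : F ⊆ (thickening δ E)ᶜ := fun y hy hyU => by
    obtain ⟨z, hz, hyz⟩ := mem_thickening_iff.1 hyU
    linarith [setDist_le_dist hz hy, dist_comm y z]
  rcases E.eq_empty_or_nonempty with rfl | hE
  · simpa using hδ
  rcases F.eq_empty_or_nonempty with rfl | hF'
  · rw [setDist_empty_right] at hδ
    exact hδ.trans (setDist_nonneg _ _)
  refine le_setDist hE (hF'.mono hF) fun x hx y hy => ?_
  by_contra! hxy
  exact hy (mem_thickening_iff.2 ⟨x, hx, dist_comm x y ▸ hxy⟩)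

end SetDist

section Weight

variable {n : ℕ} {p q r : ℝ≥0∞}

lemma div_toReal_le_div_toReal {a : ℝ} (ha : 0 ≤ a) (hp : p ≠ 0) (hpq : p ≤ q) :
    a / q.toReal ≤ a / p.toReal := by
  rcases eq_or_ne q ∞ with rfl | hq
  · simpa using div_nonneg ha toReal_nonneg
  have hp' : p ≠ ∞ := ne_top_of_le_ne_top hq hpq
  exact div_le_div_of_nonneg_left ha (toReal_pos hp hp') (toReal_mono hq hpq)

def offDiagonalWeight (n : ℕ) (p q : ℝ≥0∞) (C c t D : ℝ) : ℝ :=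
  C * t ^ (-|(n : ℝ) / q.toReal - (n : ℝ) / p.toReal| / 2) * Real.exp (-(c * D ^ 2) / t)

variable {C C₁ C₂ c c₁ c₂ t D D₁ D₂ : ℝ}

lemma offDiagonalWeight_nonneg (hC : 0 ≤ C) (ht : 0 ≤ t) :
    0 ≤ offDiagonalWeight n p q C c t D := by
  unfold offDiagonalWeight
  have := Real.rpow_nonneg ht (-|(n : ℝ) / q.toReal - (n : ℝ) / p.toReal| / 2)
  positivity

lemma offDiagonalWeight_le_offDiagonalWeight_zero (hC : 0 ≤ C) (hc : 0 ≤ c) (ht : 0 < t) :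
    offDiagonalWeight n p q C c t D ≤ offDiagonalWeight n p q C c t 0 := by
  have hexp : Real.exp (-(c * D ^ 2) / t) ≤ Real.exp (-(c * 0 ^ 2) / t) := by
    rw [Real.exp_le_exp, zero_pow two_ne_zero, mul_zero, neg_zero, zero_div]
    exact div_nonpos_of_nonpos_of_nonneg (neg_nonpos.2 (by positivity)) ht.le
  have := Real.rpow_nonneg ht.le (-|(n : ℝ) / q.toReal - (n : ℝ) / p.toReal| / 2)
  exact mul_le_mul_of_nonneg_left hexp (by positivity)

lemma rpow_offDiagonalExponent_mul (hp : p ≠ 0) (hpq : p ≤ q) (hqr : q ≤ r) (ht : 0 < t) :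
    t ^ (-|(n : ℝ) / r.toReal - (n : ℝ) / q.toReal| / 2) *
        t ^ (-|(n : ℝ) / q.toReal - (n : ℝ) / p.toReal| / 2) =
      t ^ (-|(n : ℝ) / r.toReal - (n : ℝ) / p.toReal| / 2) := by
  have hn : (0 : ℝ) ≤ n := n.cast_nonneg
  have hqp := div_toReal_le_div_toReal hn hp hpq
  have hrq := div_toReal_le_div_toReal hn (ne_bot_of_le_ne_bot hp hpq) hqr
  rw [← Real.rpow_add ht, abs_of_nonpos (by linarith), abs_of_nonpos (by linarith),
    abs_of_nonpos (by linarith)]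
  ring_nf

lemma min_div_four_mul_sq_le (hc₁ : 0 ≤ c₁) (hc₂ : 0 ≤ c₂) (hD : 0 ≤ D)
    (hD₁₂ : D / 2 ≤ D₁ ∨ D / 2 ≤ D₂) : min c₁ c₂ / 4 * D ^ 2 ≤ c₁ * D₁ ^ 2 + c₂ * D₂ ^ 2 := by
  have h₁ := min_le_left c₁ c₂
  have h₂ := min_le_right c₁ c₂
  rcases hD₁₂ with h | h
  · have : (D / 2) ^ 2 ≤ D₁ ^ 2 := pow_le_pow_left₀ (by linarith) h 2
    nlinarith [sq_nonneg D, sq_nonneg D₂]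
  · have : (D / 2) ^ 2 ≤ D₂ ^ 2 := pow_le_pow_left₀ (by linarith) h 2
    nlinarith [sq_nonneg D, sq_nonneg D₁]

lemma offDiagonalWeight_mul_le (hp : p ≠ 0) (hpq : p ≤ q) (hqr : q ≤ r) (hC₁ : 0 ≤ C₁)
    (hC₂ : 0 ≤ C₂) (hc₁ : 0 ≤ c₁) (hc₂ : 0 ≤ c₂) (ht : 0 < t) (hD : 0 ≤ D)
    (hD₁₂ : D / 2 ≤ D₁ ∨ D / 2 ≤ D₂) :
    offDiagonalWeight n q r C₂ c₂ t D₂ * offDiagonalWeight n p q C₁ c₁ t D₁ ≤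
      offDiagonalWeight n p r (C₁ * C₂) (min c₁ c₂ / 4) t D := by
  have hexp : Real.exp (-(c₂ * D₂ ^ 2) / t) * Real.exp (-(c₁ * D₁ ^ 2) / t) ≤
      Real.exp (-(min c₁ c₂ / 4 * D ^ 2) / t) := by
    rw [← Real.exp_add, Real.exp_le_exp, ← add_div, div_le_div_iff_of_pos_right ht]
    linarith [min_div_four_mul_sq_le hc₁ hc₂ hD hD₁₂]
  calc offDiagonalWeight n q r C₂ c₂ t D₂ * offDiagonalWeight n p q C₁ c₁ t D₁
      = C₁ * C₂ * (t ^ (-|(n : ℝ) / r.toReal - (n : ℝ) / q.toReal| / 2) *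
          t ^ (-|(n : ℝ) / q.toReal - (n : ℝ) / p.toReal| / 2)) *
          (Real.exp (-(c₂ * D₂ ^ 2) / t) * Real.exp (-(c₁ * D₁ ^ 2) / t)) := by
        unfold offDiagonalWeight; ring
    _ ≤ _ := by
        rw [rpow_offDiagonalExponent_mul hp hpq hqr ht]
        unfold offDiagonalWeight
        have := Real.rpow_nonneg ht.le (-|(n : ℝ) / r.toReal - (n : ℝ) / p.toReal| / 2)
        gcongr

end Weight

lemma eLpNorm_add_le_ofReal_two_mul {α : Type*} [MeasurableSpace α] {μ : Measure α}
    {p : ℝ≥0∞} {f g : α → ℝ} (hf : AEStronglyMeasurable f μ) (hg : AEStronglyMeasurable g μ)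
    (hp : 1 ≤ p) {K : ℝ} (hK : 0 ≤ K) {M : ℝ≥0∞} (hfK : eLpNorm f p μ ≤ ENNReal.ofReal K * M)
    (hgK : eLpNorm g p μ ≤ ENNReal.ofReal K * M) :
    eLpNorm (f + g) p μ ≤ ENNReal.ofReal (2 * K) * M := by
  rw [two_mul, ENNReal.ofReal_add hK hK, add_mul]
  exact (eLpNorm_add_le hf hg hp).trans (add_le_add hfK hgK)

section OffDiagonal

variable {n : ℕ} {p q r : ℝ≥0∞}

def HasOffDiagonalEstimates (p q : ℝ≥0∞) (C c : ℝ)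
    (T : ℝ → (EuclideanSpace ℝ (Fin n) → ℝ) → EuclideanSpace ℝ (Fin n) → ℝ) : Prop :=
  ∀ E F : Set (EuclideanSpace ℝ (Fin n)), IsClosed E → IsClosed F → ∀ t : ℝ, 0 < t →
    ∀ h : EuclideanSpace ℝ (Fin n) → ℝ, MemLp h p volume → MemLp h 2 volume →
      Function.support h ⊆ E →
      eLpNorm (T t h) q (volume.restrict F) ≤
        ENNReal.ofReal (offDiagonalWeight n p q C c t (setDist E F)) * eLpNorm h p volume

namespace HasOffDiagonalEstimates

variable {T S : ℝ → (EuclideanSpace ℝ (Fin n) → ℝ) → EuclideanSpace ℝ (Fin n) → ℝ}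
  {C C₁ C₂ c c₁ c₂ t : ℝ} {h : EuclideanSpace ℝ (Fin n) → ℝ}

lemma eLpNorm_le (hT : HasOffDiagonalEstimates p q C c T) (hC : 0 ≤ C) (hc : 0 ≤ c)
    (ht : 0 < t) (hp : MemLp h p volume) (h2 : MemLp h 2 volume) :
    eLpNorm (T t h) q volume ≤
      ENNReal.ofReal (offDiagonalWeight n p q C c t 0) * eLpNorm h p volume := by
  have := hT Set.univ Set.univ isClosed_univ isClosed_univ t ht h hp h2 (Set.subset_univ _)
  rw [Measure.restrict_univ] at this
  exact this.trans (by gcongr; exact offDiagonalWeight_le_offDiagonalWeight_zero hC hc ht)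

lemma eLpNorm_restrict_le_mul (hS : HasOffDiagonalEstimates q r C c S) (hC : 0 ≤ C)
    {A F : Set (EuclideanSpace ℝ (Fin n))} (hA : IsClosed A) (hF : IsClosed F) (ht : 0 < t)
    {u : EuclideanSpace ℝ (Fin n) → ℝ} (hu_q : MemLp u q volume) (hu_2 : MemLp u 2 volume)
    (hu_supp : Function.support u ⊆ A) {w : ℝ} {M : ℝ≥0∞}
    (hu : eLpNorm u q volume ≤ ENNReal.ofReal w * M) :
    eLpNorm (S t u) r (volume.restrict F) ≤
      ENNReal.ofReal (offDiagonalWeight n q r C c t (setDist A F) * w) * M := by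
  rw [ENNReal.ofReal_mul (offDiagonalWeight_nonneg hC ht.le), mul_assoc]
  exact (hS A F hA hF t ht u hu_q hu_2 hu_supp).trans (by gcongr)

theorem comp (hp : 1 ≤ p) (hpq : p ≤ q) (hqr : q ≤ r) (hC₁ : 0 ≤ C₁) (hC₂ : 0 ≤ C₂)
    (hc₁ : 0 ≤ c₁) (hc₂ : 0 ≤ c₂)
    (hT_L2 : ∀ t, 0 < t → ∀ u, MemLp u 2 volume → MemLp (T t u) 2 volume)
    (hS_meas : ∀ t, 0 < t → ∀ u, MemLp u 2 volume → AEStronglyMeasurable (S t u) volume)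
    (hS_add : ∀ t, 0 < t → ∀ u v, S t (u + v) = S t u + S t v)
    (hT : HasOffDiagonalEstimates p q C₁ c₁ T) (hS : HasOffDiagonalEstimates q r C₂ c₂ S) :
    HasOffDiagonalEstimates p r (2 * (C₁ * C₂)) (min c₁ c₂ / 4) fun t h => S t (T t h) := by
  intro E F hE hF t ht h hp' h2 hsupp
  beta_reduce
  set D := setDist E F
  set U := thickening (D / 2) E
  set g := T t h
  set M := eLpNorm h p volume
  set K := offDiagonalWeight n p r (C₁ * C₂) (min c₁ c₂ / 4) t D
  have hp₀ : p ≠ 0 := (zero_lt_one.trans_le hp).ne'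
  have hD : 0 ≤ D := setDist_nonneg E F
  have hU : MeasurableSet U := isOpen_thickening.measurableSet
  have hUc : IsClosed Uᶜ := isOpen_thickening.isClosed_compl
  have hg_2 : MemLp g 2 volume := hT_L2 t ht h h2
  have hg_bound := hT.eLpNorm_le hC₁ hc₁ ht hp' h2
  have hg_q : MemLp g q volume :=
    ⟨hg_2.1, hg_bound.trans_lt (mul_lt_top ofReal_lt_top hp'.2)⟩
  have h_near : eLpNorm (S t (U.indicator g)) r (volume.restrict F) ≤ ENNReal.ofReal K * M := by
    refine (hS.eLpNorm_restrict_le_mul hC₂ isClosed_cthickening hF ht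
      (hg_q.indicator hU) (hg_2.indicator hU)
      (Set.support_indicator_subset.trans (thickening_subset_cthickening _ _))
      ((eLpNorm_indicator_le g).trans hg_bound)).trans ?_
    gcongr
    refine offDiagonalWeight_mul_le hp₀ hpq hqr hC₁ hC₂ hc₁ hc₂ ht hD (Or.inr ?_)
    linarith [sub_le_setDist_cthickening (by positivity : 0 ≤ D / 2) E F]
  have h_far : eLpNorm (S t (Uᶜ.indicator g)) r (volume.restrict F) ≤ ENNReal.ofReal K * M := by
    have hg_far := hT E Uᶜ hE hUc t ht h hp' h2 hsupp
    rw [← eLpNorm_indicator_eq_eLpNorm_restrict hU.compl] at hg_far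
    refine (hS.eLpNorm_restrict_le_mul hC₂ hUc hF ht (hg_q.indicator hU.compl)
      (hg_2.indicator hU.compl) Set.support_indicator_subset hg_far).trans ?_
    gcongr
    exact offDiagonalWeight_mul_le hp₀ hpq hqr hC₁ hC₂ hc₁ hc₂ ht hD
      (Or.inl (le_setDist_compl_thickening (F := F) (by linarith)))
  have hK : 0 ≤ K := offDiagonalWeight_nonneg (mul_nonneg hC₁ hC₂) ht.le
  have h_two : offDiagonalWeight n p r (2 * (C₁ * C₂)) (min c₁ c₂ / 4) t D = 2 * K := by
    simp only [K, offDiagonalWeight]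
    ring
  rw [h_two, ← Set.indicator_self_add_compl U g, hS_add t ht]
  exact eLpNorm_add_le_ofReal_two_mul (hS_meas t ht _ (hg_2.indicator hU)).restrict
    (hS_meas t ht _ (hg_2.indicator hU.compl)).restrict (hp.trans (hpq.trans hqr)) hK h_near h_far

end HasOffDiagonalEstimates

end OffDiagonal

theorem off_diagonal_composition_general
    (n : ℕ) (p q r : ℝ≥0∞) (hp : 1 ≤ p) (hpq : p ≤ q) (hqr : q ≤ r)
    (C₁ c₁ C₂ c₂ : ℝ) (hC₁ : 0 < C₁) (hc₁ : 0 < c₁) (hC₂ : 0 < C₂) (hc₂ : 0 < c₂) :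
    ∃ C c : ℝ, 0 < C ∧ 0 < c ∧
      ∀ (T S : ℝ → (EuclideanSpace ℝ (Fin n) → ℝ) → (EuclideanSpace ℝ (Fin n) → ℝ)),
        -- `(T_t)` and `(S_t)` are families of bounded linear operators on `L²`
        (∀ t : ℝ, 0 < t → IsLinearMap ℝ (T t)) →
        (∀ t : ℝ, 0 < t → IsLinearMap ℝ (S t)) →
        (∀ t : ℝ, 0 < t → ∃ M : ℝ≥0∞, M ≠ ∞ ∧ ∀ h, MemLp h 2 volume →
          MemLp (T t h) 2 volume ∧ eLpNorm (T t h) 2 volume ≤ M * eLpNorm h 2 volume) →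
        (∀ t : ℝ, 0 < t → ∃ M : ℝ≥0∞, M ≠ ∞ ∧ ∀ h, MemLp h 2 volume →
          MemLp (S t h) 2 volume ∧ eLpNorm (S t h) 2 volume ≤ M * eLpNorm h 2 volume) →
        -- `(T_t)` satisfies `L^p–L^q` off-diagonal estimates
        (∀ E F : Set (EuclideanSpace ℝ (Fin n)), IsClosed E → IsClosed F →
          ∀ t : ℝ, 0 < t →
          ∀ h : EuclideanSpace ℝ (Fin n) → ℝ, MemLp h p volume → MemLp h 2 volume →
            Function.support h ⊆ E →
            eLpNorm (T t h) q (volume.restrict F) ≤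
              ENNReal.ofReal (C₁ * t ^ (-|(n : ℝ) / q.toReal - (n : ℝ) / p.toReal| / 2) *
                  Real.exp (-(c₁ * setDist E F ^ 2) / t)) * eLpNorm h p volume) →
        -- `(S_t)` satisfies `L^q–L^r` off-diagonal estimates, `S_t` defined on `L^q ∩ L²`
        (∀ E F : Set (EuclideanSpace ℝ (Fin n)), IsClosed E → IsClosed F →
          ∀ t : ℝ, 0 < t →
          ∀ h : EuclideanSpace ℝ (Fin n) → ℝ, MemLp h q volume → MemLp h 2 volume →
            Function.support h ⊆ E →
            eLpNorm (S t h) r (volume.restrict F) ≤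
              ENNReal.ofReal (C₂ * t ^ (-|(n : ℝ) / r.toReal - (n : ℝ) / q.toReal| / 2) *
                  Real.exp (-(c₂ * setDist E F ^ 2) / t)) * eLpNorm h q volume) →
        -- conclusion: `(S_t T_t)` satisfies `L^p–L^r` off-diagonal estimates
        ∀ E F : Set (EuclideanSpace ℝ (Fin n)), IsClosed E → IsClosed F →
          ∀ t : ℝ, 0 < t →
          ∀ h : EuclideanSpace ℝ (Fin n) → ℝ, MemLp h p volume → MemLp h 2 volume →
            Function.support h ⊆ E →
            eLpNorm (S t (T t h)) r (volume.restrict F) ≤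
              ENNReal.ofReal (C * t ^ (-|(n : ℝ) / r.toReal - (n : ℝ) / p.toReal| / 2) *
                  Real.exp (-(c * setDist E F ^ 2) / t)) * eLpNorm h p volume := by
  refine ⟨2 * (C₁ * C₂), min c₁ c₂ / 4, by positivity, by positivity, ?_⟩
  intro T S _ hS_lin hT_bdd hS_bdd hT hS
  exact HasOffDiagonalEstimates.comp hp hpq hqr hC₁.le hC₂.le hc₁.le hc₂.le
    (fun t ht u hu => let ⟨_, _, hT_M⟩ := hT_bdd t ht; (hT_M u hu).1)
    (fun t ht u hu => let ⟨_, _, hS_M⟩ := hS_bdd t ht; (hS_M u hu).1.1)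
    (fun t ht => (hS_lin t ht).map_add) hT hS

/-- Composition of off-diagonal estimates: if `1 ≤ p ≤ q ≤ r ≤ ∞`, `(T_t)_{t>0}` satisfies
`L^p–L^q` off-diagonal estimates (constants `C₁, c₁`) and `(S_t)_{t>0}` satisfies `L^q–L^r`
off-diagonal estimates (constants `C₂, c₂`), both being families of bounded linear operators
on `L²`, then `(S_t T_t)_{t>0}` satisfies `L^p–L^r` off-diagonal estimates with constants
`C, c` depending only on `n`, `p`, `q`, `r`, `C₁`, `c₁`, `C₂`, `c₂`.  Here
`γ_{pq} = |n/q − n/p|`. -/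
theorem off_diagonal_composition
    (n : ℕ) (hn : 1 ≤ n) (p q r : ℝ≥0∞) (hp : 1 ≤ p) (hpq : p ≤ q) (hqr : q ≤ r)
    (C₁ c₁ C₂ c₂ : ℝ) (hC₁ : 0 < C₁) (hc₁ : 0 < c₁) (hC₂ : 0 < C₂) (hc₂ : 0 < c₂) :
    ∃ C c : ℝ, 0 < C ∧ 0 < c ∧
      ∀ (T S : ℝ → (EuclideanSpace ℝ (Fin n) → ℝ) → (EuclideanSpace ℝ (Fin n) → ℝ)),
        -- `(T_t)` and `(S_t)` are families of bounded linear operators on `L²`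
        (∀ t : ℝ, 0 < t → IsLinearMap ℝ (T t)) →
        (∀ t : ℝ, 0 < t → IsLinearMap ℝ (S t)) →
        (∀ t : ℝ, 0 < t → ∃ M : ℝ≥0∞, M ≠ ∞ ∧ ∀ h, MemLp h 2 volume →
          MemLp (T t h) 2 volume ∧ eLpNorm (T t h) 2 volume ≤ M * eLpNorm h 2 volume) →
        (∀ t : ℝ, 0 < t → ∃ M : ℝ≥0∞, M ≠ ∞ ∧ ∀ h, MemLp h 2 volume →
          MemLp (S t h) 2 volume ∧ eLpNorm (S t h) 2 volume ≤ M * eLpNorm h 2 volume) →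
        -- `(T_t)` satisfies `L^p–L^q` off-diagonal estimates
        (∀ E F : Set (EuclideanSpace ℝ (Fin n)), IsClosed E → IsClosed F →
          ∀ t : ℝ, 0 < t →
          ∀ h : EuclideanSpace ℝ (Fin n) → ℝ, MemLp h p volume → MemLp h 2 volume →
            Function.support h ⊆ E →
            eLpNorm (T t h) q (volume.restrict F) ≤
              ENNReal.ofReal (C₁ * t ^ (-|(n : ℝ) / q.toReal - (n : ℝ) / p.toReal| / 2) *
                  Real.exp (-(c₁ * setDist E F ^ 2) / t)) * eLpNorm h p volume) →
        -- `(S_t)` satisfies `L^q–L^r` off-diagonal estimates, `S_t` defined on `L^q ∩ L²`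
        (∀ E F : Set (EuclideanSpace ℝ (Fin n)), IsClosed E → IsClosed F →
          ∀ t : ℝ, 0 < t →
          ∀ h : EuclideanSpace ℝ (Fin n) → ℝ, MemLp h q volume → MemLp h 2 volume →
            Function.support h ⊆ E →
            eLpNorm (S t h) r (volume.restrict F) ≤
              ENNReal.ofReal (C₂ * t ^ (-|(n : ℝ) / r.toReal - (n : ℝ) / q.toReal| / 2) *
                  Real.exp (-(c₂ * setDist E F ^ 2) / t)) * eLpNorm h q volume) →
        -- conclusion: `(S_t T_t)` satisfies `L^p–L^r` off-diagonal estimates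
        ∀ E F : Set (EuclideanSpace ℝ (Fin n)), IsClosed E → IsClosed F →
          ∀ t : ℝ, 0 < t →
          ∀ h : EuclideanSpace ℝ (Fin n) → ℝ, MemLp h p volume → MemLp h 2 volume →
            Function.support h ⊆ E →
            eLpNorm (S t (T t h)) r (volume.restrict F) ≤
              ENNReal.ofReal (C * t ^ (-|(n : ℝ) / r.toReal - (n : ℝ) / p.toReal| / 2) *
                  Real.exp (-(c * setDist E F ^ 2) / t)) * eLpNorm h p volume :=
  off_diagonal_composition_general n p q r hp hpq hqr C₁ c₁ C₂ c₂ hC₁ hc₁ hC₂ hc₂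
end
end

section
/- Pointwise bounds for the kernel g_s: let m ≥ 1 be an integer. There is a constant C depending only on m such that for every s > 0 the function g_s(t) = Σ_{k=0}^{m} binom(m,k) (−1)^k 1_{{t>ks}} (t − ks)^{−1/2}, defined for t > 0, satisfies: (i) if 0 ≤ k ≤ m and ks < t ≤ (k+1)s ≤ (m+1)s, then |g_s(t)| ≤ C (t − ks)^{−1/2}; and (ii) if t > (m+1)s, then |g_s(t)| ≤ C s^m t^{−m−1/2}. -/
/-!
For `t > m s` every indicator in `g_s(t)` equals one, so `g_s(t)` is the `m`-th forward
difference with step `s` of `x ↦ x^{-1/2}` at `t - m s`. Iterating the mean value theorem turns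
it into `s^m` times the `m`-th derivative `c_m ξ^{-1/2-m}` at a point `ξ ≥ t - m s ≥ t/(m+1)`,
which is (ii). In (i) only the terms with index `j ≤ k` are active, each of size at most
`(t - k s)^{-1/2}`, so `|g_s(t)| ≤ 2^m (t - k s)^{-1/2}`.
-/

noncomputable section

/-- The kernel `g_s(t) = Σ_{k=0}^m binom(m,k)(−1)^k 1_{t > ks} (t − ks)^{−1/2}`. -/
noncomputable def gker (m : ℕ) (s t : ℝ) : ℝ :=
  ∑ k ∈ Finset.range (m + 1), (m.choose k : ℝ) * (-1) ^ k *
    (if (k : ℝ) * s < t then (Real.sqrt (t - (k : ℝ) * s))⁻¹ else 0)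

open Finset fwdDiff

theorem hasDerivAt_fwdDiff_iter {𝕜 E : Type*} [NontriviallyNormedField 𝕜]
    [NormedAddCommGroup E] [NormedSpace 𝕜 E] {f : 𝕜 → E} {h y : 𝕜} (n : ℕ)
    (hf : ∀ k ≤ n, DifferentiableAt 𝕜 f (y + k • h)) :
    HasDerivAt ((Δ_[h])^[n] f) ((Δ_[h])^[n] (deriv f) y) y := by
  simp only [funext (fwdDiff_iter_eq_sum_shift h _ n), fwdDiff_iter_eq_sum_shift h (deriv f) n y]
  refine HasDerivAt.fun_sum fun k hk ↦ ?_
  have hk : k ≤ n := Nat.lt_succ_iff.mp (mem_range.mp hk)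
  exact ((hf k hk).hasDerivAt.comp_add_const y (k • h)).const_smul
    ((-1 : ℤ) ^ (n - k) * n.choose k)

theorem exists_fwdDiff_iter_eq_pow_mul_iterate_deriv {h : ℝ} (hh : 0 < h) (n : ℕ)
    {f : ℝ → ℝ} {x : ℝ}
    (hf : ∀ k < n, ∀ y ∈ Set.Icc x (x + n * h), DifferentiableAt ℝ (deriv^[k] f) y) :
    ∃ ξ ∈ Set.Icc x (x + n * h), (Δ_[h])^[n] f x = h ^ n * deriv^[n] f ξ := by
  induction n generalizing f x with
  | zero => exact ⟨x, by simp, by simp⟩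
  | succ n ih =>
    have hF : ∀ y ∈ Set.Icc x (x + h),
        HasDerivAt ((Δ_[h])^[n] f) ((Δ_[h])^[n] (deriv f) y) y := by
      intro y hy
      refine hasDerivAt_fwdDiff_iter n fun k hk ↦ hf 0 n.succ_pos _ ⟨?_, ?_⟩
      · have : (0 : ℝ) ≤ k • h := by positivity
        linarith [hy.1]
      · have : (k : ℝ) * h ≤ n * h := by gcongr
        rw [nsmul_eq_mul]; push_cast; linarith [hy.2]
    obtain ⟨c, hc, hslope⟩ := exists_hasDerivAt_eq_slope _ _ (by linarith : x < x + h)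
      (fun y hy ↦ (hF y hy).continuousAt.continuousWithinAt)
      (fun y hy ↦ hF y (Set.Ioo_subset_Icc_self hy))
    obtain ⟨ξ, hξ, hdiff⟩ := ih (f := deriv f) (x := c) fun k hk y hy ↦
      hf (k + 1) (by omega) y ⟨by linarith [hy.1, hc.1], by push_cast; linarith [hy.2, hc.2]⟩
    refine ⟨ξ, ⟨by linarith [hξ.1, hc.1], by push_cast; linarith [hξ.2, hc.2]⟩, ?_⟩
    have hstep : (Δ_[h])^[n] f (x + h) - (Δ_[h])^[n] f x = (Δ_[h])^[n] (deriv f) c * h := by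
      rw [hslope, add_sub_cancel_left, div_mul_cancel₀ _ hh.ne']
    rw [Function.iterate_succ_apply', fwdDiff, hstep, hdiff, Function.iterate_succ_apply, pow_succ]
    ring

theorem exists_fwdDiff_iter_rpow_eq {h : ℝ} (hh : 0 < h) (n : ℕ) (p : ℝ) {x : ℝ} (hx : 0 < x) :
    ∃ ξ ∈ Set.Icc x (x + n * h),
      (Δ_[h])^[n] (fun y ↦ y ^ p) x = h ^ n * ((descPochhammer ℝ n).eval p * ξ ^ (p - n)) := by
  have hderiv (k : ℕ) : deriv^[k] (fun y : ℝ ↦ y ^ p) =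
      fun y ↦ (descPochhammer ℝ k).eval p * y ^ (p - k) :=
    funext (Real.iter_deriv_rpow_const p · k)
  obtain ⟨ξ, hξ, hdiff⟩ :=
    exists_fwdDiff_iter_eq_pow_mul_iterate_deriv hh n fun k _ y hy ↦ by
      rw [hderiv]
      exact ((Real.differentiableAt_rpow_const_of_ne _ (by linarith [hy.1])).const_mul _)
  exact ⟨ξ, hξ, by rw [hdiff, hderiv]⟩

theorem gker_eq_fwdDiff_iter {m : ℕ} {s t : ℝ} (hs : 0 ≤ s) (ht : m * s < t) :
    gker m s t = (Δ_[s])^[m] (fun x ↦ x ^ (-(1 : ℝ) / 2)) (t - m * s) := by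
  rw [gker, fwdDiff_iter_eq_sum_shift]
  conv_rhs => rw [← sum_range_reflect]
  refine sum_congr rfl fun k hk ↦ ?_
  have hkm : k ≤ m := Nat.lt_succ_iff.mp (mem_range.mp hk)
  have hks : (k : ℝ) * s < t := by
    have : (k : ℝ) * s ≤ m * s := by gcongr
    linarith
  rw [if_pos hks, Real.sqrt_eq_rpow, ← Real.rpow_neg (by linarith), add_tsub_cancel_right,
    Nat.sub_sub_self hkm, Nat.choose_symm hkm, nsmul_eq_mul, Nat.cast_sub hkm,
    show t - m * s + (m - k : ℝ) * s = t - k * s by ring, neg_div]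
  push_cast [zsmul_eq_mul]
  ring

theorem abs_gker_le_two_pow_mul {m k : ℕ} {s t : ℝ} (hs : 0 < s) (hkt : k * s < t)
    (htk : t ≤ (k + 1) * s) : |gker m s t| ≤ 2 ^ m * (Real.sqrt (t - k * s))⁻¹ := by
  have hterm (j : ℕ) : |(if (j : ℝ) * s < t then (Real.sqrt (t - j * s))⁻¹ else 0)|
      ≤ (Real.sqrt (t - k * s))⁻¹ := by
    split_ifs with hjt
    · have hjk : (j : ℝ) ≤ k := by
        have : (j : ℝ) < k + 1 := lt_of_mul_lt_mul_right (hjt.trans_le htk) hs.le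
        exact_mod_cast Nat.lt_succ_iff.mp (by exact_mod_cast this)
      rw [abs_of_nonneg (by positivity)]
      gcongr
    · simp
  calc |gker m s t|
      ≤ ∑ j ∈ range (m + 1), (m.choose j : ℝ) * (Real.sqrt (t - k * s))⁻¹ := by
        refine (abs_sum_le_sum_abs _ _).trans (sum_le_sum fun j _ ↦ ?_)
        rw [abs_mul, abs_mul, abs_pow, abs_neg, abs_one, one_pow, mul_one, Nat.abs_cast]
        exact mul_le_mul_of_nonneg_left (hterm j) (m.choose j).cast_nonneg
    _ = 2 ^ m * (Real.sqrt (t - k * s))⁻¹ := by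
        rw [← sum_mul, ← Nat.cast_sum, Nat.sum_range_choose, Nat.cast_pow, Nat.cast_ofNat]

theorem abs_gker_le_of_lt {m : ℕ} {s t : ℝ} (hs : 0 < s) (ht : (m + 1) * s < t) :
    |gker m s t| ≤ |(descPochhammer ℝ m).eval (-(1 : ℝ) / 2)| * (m + 1) ^ ((m : ℝ) + 1 / 2) *
      s ^ m * t ^ (-(m : ℝ) - 1 / 2) := by
  have ht0 : 0 < t := lt_trans (by positivity) ht
  have hlow : t / (m + 1) ≤ t - m * s := by
    rw [div_le_iff₀ (by positivity)]
    nlinarith [mul_le_mul_of_nonneg_left ht.le m.cast_nonneg (α := ℝ)]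
  obtain ⟨ξ, hξ, hdiff⟩ := exists_fwdDiff_iter_rpow_eq hs m (-(1 : ℝ) / 2)
    (show 0 < t - m * s by linarith)
  have hξ : t / (m + 1) ≤ ξ := hlow.trans hξ.1
  have hξ0 : 0 < ξ := lt_of_lt_of_le (by positivity) hξ
  have hpow :
      ξ ^ (-(1 : ℝ) / 2 - m) ≤ (m + 1) ^ ((m : ℝ) + 1 / 2) * t ^ (-(m : ℝ) - 1 / 2) := by
    calc ξ ^ (-(1 : ℝ) / 2 - m) ≤ (t / (m + 1)) ^ (-(1 : ℝ) / 2 - m) :=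
          Real.rpow_le_rpow_of_nonpos (by positivity) hξ (by linarith [m.cast_nonneg (α := ℝ)])
      _ = (m + 1) ^ ((m : ℝ) + 1 / 2) * t ^ (-(m : ℝ) - 1 / 2) := by
          rw [Real.div_rpow ht0.le (by positivity), div_eq_mul_inv,
            ← Real.rpow_neg (by positivity)]
          ring_nf
  rw [gker_eq_fwdDiff_iter hs.le (by linarith), hdiff, abs_mul, abs_mul, abs_pow, abs_of_pos hs,
    abs_of_pos (Real.rpow_pos_of_pos hξ0 _)]
  calc s ^ m * (|(descPochhammer ℝ m).eval (-(1 : ℝ) / 2)| * ξ ^ (-(1 : ℝ) / 2 - m))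
      ≤ s ^ m * (|(descPochhammer ℝ m).eval (-(1 : ℝ) / 2)| *
          ((m + 1) ^ ((m : ℝ) + 1 / 2) * t ^ (-(m : ℝ) - 1 / 2))) := by gcongr
    _ = _ := by ring

theorem gker_pointwise_bounds_general (m : ℕ) :
    ∃ C : ℝ, 0 < C ∧
      ∀ s : ℝ, 0 < s → ∀ t : ℝ,
        (∀ k : ℕ, k ≤ m → (k : ℝ) * s < t → t ≤ ((k : ℝ) + 1) * s →
          |gker m s t| ≤ C * (Real.sqrt (t - (k : ℝ) * s))⁻¹) ∧
        (((m : ℝ) + 1) * s < t →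
          |gker m s t| ≤ C * s ^ m * t ^ (-(m : ℝ) - 1 / 2)) := by
  set A : ℝ := |(descPochhammer ℝ m).eval (-(1 : ℝ) / 2)| * (m + 1) ^ ((m : ℝ) + 1 / 2)
  have hA : 0 ≤ A := by positivity
  refine ⟨2 ^ m + A, by positivity, fun s hs t ↦ ⟨fun k _ hkt htk ↦ ?_, fun ht ↦ ?_⟩⟩
  · calc |gker m s t|
        ≤ 2 ^ m * (Real.sqrt (t - k * s))⁻¹ := abs_gker_le_two_pow_mul hs hkt htk
      _ ≤ (2 ^ m + A) * (Real.sqrt (t - k * s))⁻¹ := by gcongr; linarith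
  · calc |gker m s t| ≤ A * s ^ m * t ^ (-(m : ℝ) - 1 / 2) := abs_gker_le_of_lt hs ht
      _ ≤ (2 ^ m + A) * s ^ m * t ^ (-(m : ℝ) - 1 / 2) := by
        have : 0 < t := lt_trans (by positivity) ht
        gcongr; linarith [pow_pos (two_pos (α := ℝ)) m]

/-- Pointwise bounds for `g_s`: for `m ≥ 1` there is `C = C(m)` such that for every `s > 0`:
(i) if `0 ≤ k ≤ m` and `ks < t ≤ (k+1)s`, then `|g_s(t)| ≤ C (t − ks)^{−1/2}`;
(ii) if `t > (m+1)s`, then `|g_s(t)| ≤ C s^m t^{−m−1/2}`. -/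
theorem gker_pointwise_bounds (m : ℕ) (hm : 1 ≤ m) :
    ∃ C : ℝ, 0 < C ∧
      ∀ s : ℝ, 0 < s → ∀ t : ℝ,
        (∀ k : ℕ, k ≤ m → (k : ℝ) * s < t → t ≤ ((k : ℝ) + 1) * s →
          |gker m s t| ≤ C * (Real.sqrt (t - (k : ℝ) * s))⁻¹) ∧
        (((m : ℝ) + 1) * s < t →
          |gker m s t| ≤ C * s ^ m * t ^ (-(m : ℝ) - 1 / 2)) :=
  gker_pointwise_bounds_general m
end
end

section
/- Let γ ≥ 0, α ≥ 0, m > 0 be fixed parameters and c > 0 a constant. There exists a constant C, independent of j ∈ ℕ, r > 0 and t > 0, such that the integral I = ∫_0^∞ e^{−c·4^{j} r²/s} · s^{−γ/2} · t^{α}/(s+t)^{1+α} · r^{2m}/(s+t)^{m} ds satisfies I ≤ C · 4^{−jm} (2^{j} r)^{−γ} · min( (t/(4^{j} r²))^{α}, (4^{j} r²/t)^{m} ). -/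
open MeasureTheory

lemma aux_exp (p a y : ℝ) (hp : 0 ≤ p) (ha : 0 < a) (hy : 0 < y) :
    y ^ p * Real.exp (-(a * y)) ≤ (p / a) ^ p * Real.exp (-p) := by
  rcases eq_or_lt_of_le hp with h0 | hp'
  · simp only [← h0, Real.rpow_zero, one_mul, neg_zero, Real.exp_zero]
    exact Real.exp_le_one_iff.mpr (by nlinarith)
  · have hz : 0 < a * y := mul_pos ha hy
    have key : p * Real.log (a * y) - a * y ≤ p * Real.log p - p := by
      have h1 : Real.log (a * y / p) ≤ a * y / p - 1 :=
        Real.log_le_sub_one_of_pos (by positivity)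
    
      have h2 : Real.log (a * y / p) = Real.log (a * y) - Real.log p :=
        Real.log_div hz.ne' hp'.ne'
      rw [h2] at h1
      have := mul_le_mul_of_nonneg_left h1 hp
      rw [mul_sub] at this
      have hpy : p * (a * y / p) = a * y := by field_simp
      nlinarith [this]
    have l1 : y ^ p * Real.exp (-(a * y)) = (a*y) ^ p / a ^ p * Real.exp (-(a*y)) := by
      rw [Real.mul_rpow ha.le hy.le]
      field_simp
    have l2 : (a*y) ^ p = Real.exp (p * Real.log (a*y)) := by
      rw [← Real.log_rpow hz, Real.exp_log (Real.rpow_pos_of_pos hz p)]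
    have l3 : (p:ℝ) ^ p = Real.exp (p * Real.log p) := by
      rw [← Real.log_rpow hp', Real.exp_log (Real.rpow_pos_of_pos hp' p)]
    have l4 : (p / a) ^ p = p ^ p / a ^ p := Real.div_rpow hp ha.le p
    rw [l1, l4, l2, l3, div_mul_eq_mul_div, div_mul_eq_mul_div,
      ← Real.exp_add, ← Real.exp_add]
    have hap : (0:ℝ) < a ^ p := Real.rpow_pos_of_pos ha p
    exact div_le_div_of_nonneg_right (Real.exp_le_exp.mpr key) hap.le

lemma exp_rpow_bound (p a : ℝ) (hp : 0 ≤ p) (ha : 0 < a) :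
    ∃ K : ℝ, 0 ≤ K ∧ ∀ y : ℝ, 0 < y → Real.exp (-(a * y)) ≤ K * y ^ (-p) := by
  refine ⟨(p / a) ^ p * Real.exp (-p), by positivity, fun y hy => ?_⟩
  have h := aux_exp p a y hp ha hy
  have hy0 : y ^ p * y ^ (-p) = 1 := by
    rw [← Real.rpow_add hy]; simp
  calc Real.exp (-(a * y)) = Real.exp (-(a * y)) * (y ^ p * y ^ (-p)) := by
        rw [hy0, mul_one]
    _ = (y ^ p * Real.exp (-(a * y))) * y ^ (-p) := by ring
    _ ≤ ((p / a) ^ p * Real.exp (-p)) * y ^ (-p) :=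
        mul_le_mul_of_nonneg_right h (Real.rpow_nonneg hy.le _)

lemma master (f : ℝ → ℝ) (b A q : ℝ) (hb : 0 < b) (hA : 0 ≤ A) (hq : 1 < q)
    (h1 : ∀ s ∈ Set.Ioc (0:ℝ) b, f s ≤ A * b ^ (-q))
    (h2 : ∀ s ∈ Set.Ioi b, f s ≤ A * s ^ (-q)) :
    ∫⁻ s in Set.Ioi (0:ℝ), ENNReal.ofReal (f s) ≤
      ENNReal.ofReal (A * b ^ (1-q) * (1 + 1/(q-1))) := by
  have hsplit : Set.Ioi (0:ℝ) = Set.Ioc 0 b ∪ Set.Ioi b :=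
    (Set.Ioc_union_Ioi_eq_Ioi hb.le).symm
  rw [hsplit, lintegral_union measurableSet_Ioi Set.Ioc_disjoint_Ioi_same]
  have p1 : ∫⁻ s in Set.Ioc (0:ℝ) b, ENNReal.ofReal (f s) ≤
      ENNReal.ofReal (A * b ^ (1-q)) := by
    calc ∫⁻ s in Set.Ioc (0:ℝ) b, ENNReal.ofReal (f s)
        ≤ ∫⁻ _ in Set.Ioc (0:ℝ) b, ENNReal.ofReal (A * b ^ (-q)) :=
          setLIntegral_mono' measurableSet_Ioc fun s hs =>
            ENNReal.ofReal_le_ofReal (h1 s hs)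
      _ = ENNReal.ofReal (A * b ^ (-q)) * volume (Set.Ioc (0:ℝ) b) :=
          setLIntegral_const _ _
      _ = ENNReal.ofReal (A * b ^ (1-q)) := by
          rw [Real.volume_Ioc, ← ENNReal.ofReal_mul (by positivity)]
          congr 1
          rw [sub_zero, mul_assoc]
          congr 1
          rw [← Real.rpow_add_one hb.ne' (-q)]
          ring_nf
  have p2 : ∫⁻ s in Set.Ioi b, ENNReal.ofReal (f s) ≤
      ENNReal.ofReal (A * (b ^ (1-q) / (q-1))) := by
    have hq1 : (0:ℝ) < q - 1 := by linarith
    have hint : IntegrableOn (fun s => A * s ^ (-q)) (Set.Ioi b) volume :=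
      (integrableOn_Ioi_rpow_of_lt (by linarith) hb).const_mul A
    calc ∫⁻ s in Set.Ioi b, ENNReal.ofReal (f s)
        ≤ ∫⁻ s in Set.Ioi b, ENNReal.ofReal (A * s ^ (-q)) :=
          setLIntegral_mono' measurableSet_Ioi fun s hs =>
            ENNReal.ofReal_le_ofReal (h2 s hs)
      _ = ENNReal.ofReal (∫ s in Set.Ioi b, A * s ^ (-q)) := by
          rw [ofReal_integral_eq_lintegral_ofReal hint]
          filter_upwards [ae_restrict_mem measurableSet_Ioi] with s hs
          have : (0:ℝ) < s := hb.trans hs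
          positivity
      _ = ENNReal.ofReal (A * (b ^ (1-q) / (q-1))) := by
          congr 1
          rw [MeasureTheory.integral_const_mul, integral_Ioi_rpow_of_lt (by linarith) hb]
          congr 1
          have h1q : -q + 1 = 1 - q := by ring
          have hne1 : (1:ℝ) - q ≠ 0 := by linarith
          have hne2 : q - 1 ≠ 0 := by linarith
          rw [h1q, div_eq_div_iff hne1 hne2]
          ring
  calc _ ≤ ENNReal.ofReal (A * b ^ (1-q)) + ENNReal.ofReal (A * (b ^ (1-q) / (q-1))) :=
        add_le_add p1 p2
    _ = ENNReal.ofReal (A * b ^ (1-q) * (1 + 1/(q-1))) := by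
        have hq1 : (0:ℝ) < q - 1 := by linarith
        rw [← ENNReal.ofReal_add (by positivity)
          (mul_nonneg hA (div_nonneg (Real.rpow_nonneg hb.le _) hq1.le))]
        congr 1
        ring

set_option maxHeartbeats 1000000 in
/-- Elementary integral estimate: for `γ ≥ 0`, `α ≥ 0`, `m > 0` and `c > 0` there is a
constant `C`, independent of `j ∈ ℕ`, `r > 0` and `t > 0`, such that
`I = ∫_0^∞ e^{−c 4^j r²/s} s^{−γ/2} (t^α/(s+t)^{1+α}) (r^{2m}/(s+t)^m) ds`
satisfies `I ≤ C 4^{−jm} (2^j r)^{−γ} min((t/(4^j r²))^α, (4^j r²/t)^m)`. -/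
theorem integral_I_estimate (γ α m c : ℝ) (hγ : 0 ≤ γ) (hα : 0 ≤ α) (hm : 0 < m)
    (hc : 0 < c) :
    ∃ C : ℝ, 0 < C ∧
      ∀ (j : ℕ) (r t : ℝ), 0 < r → 0 < t →
        (∫⁻ s in Set.Ioi (0 : ℝ), ENNReal.ofReal
            (Real.exp (-(c * 4 ^ j * r ^ 2) / s) * s ^ (-γ / 2) *
              (t ^ α / (s + t) ^ (1 + α)) * (r ^ (2 * m) / (s + t) ^ m))) ≤
          ENNReal.ofReal (C * (4 : ℝ) ^ (-(j : ℝ) * m) * ((2 : ℝ) ^ j * r) ^ (-γ) *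
            min ((t / (4 ^ j * r ^ 2)) ^ α) ((4 ^ j * r ^ 2 / t) ^ m)) := by
  obtain ⟨K1, hK1, hb1⟩ := exp_rpow_bound (γ / 2) c (by linarith) hc
  obtain ⟨K2, hK2, hb2⟩ := exp_rpow_bound (γ / 2) (c / 2) (by linarith) (by linarith)
  obtain ⟨K3, hK3, hb3⟩ := exp_rpow_bound (1 + α + m) (c / 2) (by linarith) (by linarith)
  have hq : (1:ℝ) < 1 + α + m := by linarith
  have hq1 : (0:ℝ) < 1 + α + m - 1 := by linarith
  have hE : (0:ℝ) ≤ 1 + 1 / (1 + α + m - 1) := by positivity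
  refine ⟨(1 + 1 / (1 + α + m - 1)) * (K1 + K2 * (K3 + 1)) + 1, ?_, ?_⟩
  · have h0 : (0:ℝ) ≤ (1 + 1 / (1 + α + m - 1)) * (K1 + K2 * (K3 + 1)) :=
      mul_nonneg hE (by positivity)
    linarith
  intro j r t hr ht
  set R2 : ℝ := 4 ^ j * r ^ 2 with hR2def
  have hR2 : 0 < R2 := by rw [hR2def]; positivity
  have h2jr : (0:ℝ) < 2 ^ j * r := by positivity
  -- identities
  have h4j : (4:ℝ) ^ j = ((2:ℝ) ^ j) ^ 2 := by
    rw [← pow_mul, mul_comm, pow_mul]; norm_num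
  have hE_pre : ((2:ℝ) ^ j * r) ^ (-γ) = R2 ^ (-(γ / 2)) := by
    have hsq : R2 = ((2:ℝ) ^ j * r) ^ 2 := by rw [hR2def, mul_pow, h4j]
    rw [hsq, ← Real.rpow_natCast ((2:ℝ) ^ j * r) 2, ← Real.rpow_mul h2jr.le]
    congr 1
    push_cast
    ring
  have hR2m : R2 ^ m = (4:ℝ) ^ ((j:ℝ) * m) * r ^ (2 * m) := by
    rw [hR2def, Real.mul_rpow (by positivity) (by positivity)]
    congr 1
    · rw [← Real.rpow_natCast (4:ℝ) j, ← Real.rpow_mul (by norm_num : (0:ℝ) ≤ 4)]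
    · rw [← Real.rpow_natCast r 2, ← Real.rpow_mul hr.le]
      norm_num
  have h4jm : (0:ℝ) < (4:ℝ) ^ ((j:ℝ) * m) := Real.rpow_pos_of_pos (by norm_num) _
  have hr2m : (0:ℝ) < r ^ (2 * m) := Real.rpow_pos_of_pos hr _
  have h4E : (4:ℝ) ^ (-(j:ℝ) * m) = r ^ (2 * m) * R2 ^ (-m) := by
    rw [Real.rpow_neg hR2.le, hR2m, neg_mul, Real.rpow_neg (by norm_num : (0:ℝ) ≤ 4)]
    field_simp
  set P : ℝ := R2 ^ (-(γ / 2)) * r ^ (2 * m) * t ^ α with hPdef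
  have hP : 0 ≤ P := by
    rw [hPdef]
    positivity
  -- pointwise algebraic identity
  have eqA : ∀ s : ℝ, 0 < s →
      (R2 / s) ^ (-(γ / 2)) * s ^ (-γ / 2) *
        (t ^ α / (s + t) ^ (1 + α)) * (r ^ (2 * m) / (s + t) ^ m)
      = P * (s + t) ^ (-(1 + α + m)) := by
    intro s hs
    have hst : (0:ℝ) < s + t := by linarith
    have e1 : s ^ (-γ / 2) = (s ^ (γ / 2))⁻¹ := by
      rw [neg_div, Real.rpow_neg hs.le]
    have e2 : (R2 / s) ^ (-(γ / 2)) = (R2 ^ (γ / 2) / s ^ (γ / 2))⁻¹ := by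
      rw [Real.rpow_neg (by positivity), Real.div_rpow hR2.le hs.le]
    have e3 : (s + t) ^ (-(1 + α + m)) = ((s + t) ^ (1 + α) * (s + t) ^ m)⁻¹ := by
      rw [Real.rpow_neg hst.le, Real.rpow_add hst]
    have e4 : R2 ^ (-(γ / 2)) = (R2 ^ (γ / 2))⁻¹ := Real.rpow_neg hR2.le _
    rw [hPdef, e1, e2, e3, e4]
    have n1 : s ^ (γ / 2) ≠ 0 := (Real.rpow_pos_of_pos hs _).ne'
    have n2 : R2 ^ (γ / 2) ≠ 0 := (Real.rpow_pos_of_pos hR2 _).ne'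
    have n3 : (s + t) ^ (1 + α) ≠ 0 := (Real.rpow_pos_of_pos hst _).ne'
    have n4 : (s + t) ^ m ≠ 0 := (Real.rpow_pos_of_pos hst _).ne'
    field_simp
  have harg : ∀ s : ℝ, -(c * 4 ^ j * r ^ 2) / s = -(c * (R2 / s)) := by
    intro s; rw [hR2def]; ring
  -- pointwise bound 1
  have key1 : ∀ s : ℝ, 0 < s →
      Real.exp (-(c * 4 ^ j * r ^ 2) / s) * s ^ (-γ / 2) *
        (t ^ α / (s + t) ^ (1 + α)) * (r ^ (2 * m) / (s + t) ^ m)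
      ≤ K1 * P * (s + t) ^ (-(1 + α + m)) := by
    intro s hs
    have hst : (0:ℝ) < s + t := by linarith
    have hb : Real.exp (-(c * 4 ^ j * r ^ 2) / s) ≤ K1 * (R2 / s) ^ (-(γ / 2)) := by
      rw [harg s]; exact hb1 (R2 / s) (by positivity)
    have h2 : (0:ℝ) ≤ s ^ (-γ / 2) := Real.rpow_nonneg hs.le _
    have h3 : (0:ℝ) ≤ t ^ α / (s + t) ^ (1 + α) := by positivity
    have h4 : (0:ℝ) ≤ r ^ (2 * m) / (s + t) ^ m := by positivity
    calc Real.exp (-(c * 4 ^ j * r ^ 2) / s) * s ^ (-γ / 2) *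
          (t ^ α / (s + t) ^ (1 + α)) * (r ^ (2 * m) / (s + t) ^ m)
        ≤ K1 * (R2 / s) ^ (-(γ / 2)) * s ^ (-γ / 2) *
          (t ^ α / (s + t) ^ (1 + α)) * (r ^ (2 * m) / (s + t) ^ m) :=
          mul_le_mul_of_nonneg_right (mul_le_mul_of_nonneg_right
            (mul_le_mul_of_nonneg_right hb h2) h3) h4
      _ = K1 * ((R2 / s) ^ (-(γ / 2)) * s ^ (-γ / 2) *
          (t ^ α / (s + t) ^ (1 + α)) * (r ^ (2 * m) / (s + t) ^ m)) := by ring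
      _ = K1 * (P * (s + t) ^ (-(1 + α + m))) := by rw [eqA s hs]
      _ = K1 * P * (s + t) ^ (-(1 + α + m)) := by ring
  -- pointwise bound 2
  have key2 : ∀ s : ℝ, 0 < s →
      Real.exp (-(c * 4 ^ j * r ^ 2) / s) * s ^ (-γ / 2) *
        (t ^ α / (s + t) ^ (1 + α)) * (r ^ (2 * m) / (s + t) ^ m)
      ≤ K2 * P * (Real.exp (-(c / 2 * (R2 / s))) * (s + t) ^ (-(1 + α + m))) := by
    intro s hs
    have hst : (0:ℝ) < s + t := by linarith
    have hsplitexp : Real.exp (-(c * 4 ^ j * r ^ 2) / s)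
        = Real.exp (-(c / 2 * (R2 / s))) * Real.exp (-(c / 2 * (R2 / s))) := by
      rw [harg s, ← Real.exp_add]; congr 1; ring
    have hb : Real.exp (-(c / 2 * (R2 / s))) ≤ K2 * (R2 / s) ^ (-(γ / 2)) :=
      hb2 (R2 / s) (by positivity)
    have h2 : (0:ℝ) ≤ s ^ (-γ / 2) := Real.rpow_nonneg hs.le _
    have h3 : (0:ℝ) ≤ t ^ α / (s + t) ^ (1 + α) := by positivity
    have h4 : (0:ℝ) ≤ r ^ (2 * m) / (s + t) ^ m := by positivity
    have h5 : (0:ℝ) ≤ Real.exp (-(c / 2 * (R2 / s))) := (Real.exp_pos _).le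
    calc Real.exp (-(c * 4 ^ j * r ^ 2) / s) * s ^ (-γ / 2) *
          (t ^ α / (s + t) ^ (1 + α)) * (r ^ (2 * m) / (s + t) ^ m)
        = Real.exp (-(c / 2 * (R2 / s))) * Real.exp (-(c / 2 * (R2 / s))) * s ^ (-γ / 2) *
          (t ^ α / (s + t) ^ (1 + α)) * (r ^ (2 * m) / (s + t) ^ m) := by
          rw [hsplitexp]
      _ ≤ (K2 * (R2 / s) ^ (-(γ / 2))) * Real.exp (-(c / 2 * (R2 / s))) * s ^ (-γ / 2) *
          (t ^ α / (s + t) ^ (1 + α)) * (r ^ (2 * m) / (s + t) ^ m) := by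
          refine mul_le_mul_of_nonneg_right (mul_le_mul_of_nonneg_right
            (mul_le_mul_of_nonneg_right (mul_le_mul_of_nonneg_right hb h5) h2) h3) h4
      _ = (K2 * Real.exp (-(c / 2 * (R2 / s)))) * ((R2 / s) ^ (-(γ / 2)) * s ^ (-γ / 2) *
          (t ^ α / (s + t) ^ (1 + α)) * (r ^ (2 * m) / (s + t) ^ m)) := by ring
      _ = (K2 * Real.exp (-(c / 2 * (R2 / s)))) * (P * (s + t) ^ (-(1 + α + m))) := by
          rw [eqA s hs]
      _ = K2 * P * (Real.exp (-(c / 2 * (R2 / s))) * (s + t) ^ (-(1 + α + m))) := by ring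
  have hAI : 0 ≤ K1 * P := mul_nonneg hK1 hP
  have hAII : 0 ≤ K2 * (K3 + 1) * P :=
    mul_nonneg (mul_nonneg hK2 (by linarith)) hP
  -- bound I
  have boundI : (∫⁻ s in Set.Ioi (0 : ℝ), ENNReal.ofReal
        (Real.exp (-(c * 4 ^ j * r ^ 2) / s) * s ^ (-γ / 2) *
          (t ^ α / (s + t) ^ (1 + α)) * (r ^ (2 * m) / (s + t) ^ m))) ≤
      ENNReal.ofReal (K1 * P * t ^ (1 - (1 + α + m)) * (1 + 1 / (1 + α + m - 1))) := by
    apply master _ t (K1 * P) (1 + α + m) ht hAI hq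
    · intro s hs
      refine (key1 s hs.1).trans ?_
      have hmon : (s + t) ^ (-(1 + α + m)) ≤ t ^ (-(1 + α + m)) :=
        Real.rpow_le_rpow_of_nonpos ht (by linarith [hs.1]) (by linarith)
      exact mul_le_mul_of_nonneg_left hmon hAI
    · intro s hs
      have hs0 : 0 < s := ht.trans hs
      refine (key1 s hs0).trans ?_
      have hmon : (s + t) ^ (-(1 + α + m)) ≤ s ^ (-(1 + α + m)) :=
        Real.rpow_le_rpow_of_nonpos hs0 (by linarith) (by linarith)
      exact mul_le_mul_of_nonneg_left hmon hAI
  -- bound II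
  have boundII : (∫⁻ s in Set.Ioi (0 : ℝ), ENNReal.ofReal
        (Real.exp (-(c * 4 ^ j * r ^ 2) / s) * s ^ (-γ / 2) *
          (t ^ α / (s + t) ^ (1 + α)) * (r ^ (2 * m) / (s + t) ^ m))) ≤
      ENNReal.ofReal (K2 * (K3 + 1) * P * R2 ^ (1 - (1 + α + m)) *
        (1 + 1 / (1 + α + m - 1))) := by
    apply master _ R2 (K2 * (K3 + 1) * P) (1 + α + m) hR2 hAII hq
    · intro s hs
      obtain ⟨hs0, hsR⟩ := hs
      refine (key2 s hs0).trans ?_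
      have hst : (0:ℝ) < s + t := by linarith
      have e1 : Real.exp (-(c / 2 * (R2 / s))) ≤ K3 * (R2 / s) ^ (-(1 + α + m)) :=
        hb3 _ (by positivity)
      have e2 : (s + t) ^ (-(1 + α + m)) ≤ s ^ (-(1 + α + m)) :=
        Real.rpow_le_rpow_of_nonpos hs0 (by linarith) (by linarith)
      have e3 : (R2 / s) ^ (-(1 + α + m)) * s ^ (-(1 + α + m)) = R2 ^ (-(1 + α + m)) := by
        have n1 : s ^ (-(1 + α + m)) ≠ 0 := (Real.rpow_pos_of_pos hs0 _).ne'
        rw [Real.div_rpow hR2.le hs0.le]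
        field_simp
      have hstep : Real.exp (-(c / 2 * (R2 / s))) * (s + t) ^ (-(1 + α + m)) ≤
          (K3 + 1) * R2 ^ (-(1 + α + m)) := by
        calc Real.exp (-(c / 2 * (R2 / s))) * (s + t) ^ (-(1 + α + m))
            ≤ (K3 * (R2 / s) ^ (-(1 + α + m))) * s ^ (-(1 + α + m)) :=
              mul_le_mul e1 e2 (Real.rpow_nonneg hst.le _)
                (mul_nonneg hK3 (Real.rpow_nonneg (by positivity) _))
          _ = K3 * R2 ^ (-(1 + α + m)) := by rw [mul_assoc, e3]
          _ ≤ (K3 + 1) * R2 ^ (-(1 + α + m)) :=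
              mul_le_mul_of_nonneg_right (by linarith) (Real.rpow_nonneg hR2.le _)
      calc K2 * P * (Real.exp (-(c / 2 * (R2 / s))) * (s + t) ^ (-(1 + α + m)))
          ≤ K2 * P * ((K3 + 1) * R2 ^ (-(1 + α + m))) :=
            mul_le_mul_of_nonneg_left hstep (mul_nonneg hK2 hP)
        _ = K2 * (K3 + 1) * P * R2 ^ (-(1 + α + m)) := by ring
    · intro s hs
      have hs0 : 0 < s := hR2.trans hs
      refine (key2 s hs0).trans ?_
      have hst : (0:ℝ) < s + t := by linarith
      have e0 : Real.exp (-(c / 2 * (R2 / s))) ≤ 1 := by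
        rw [Real.exp_le_one_iff]
        have : (0:ℝ) ≤ c / 2 * (R2 / s) := by positivity
        linarith
      have e2 : (s + t) ^ (-(1 + α + m)) ≤ s ^ (-(1 + α + m)) :=
        Real.rpow_le_rpow_of_nonpos hs0 (by linarith) (by linarith)
      have hstep : Real.exp (-(c / 2 * (R2 / s))) * (s + t) ^ (-(1 + α + m)) ≤
          s ^ (-(1 + α + m)) := by
        calc Real.exp (-(c / 2 * (R2 / s))) * (s + t) ^ (-(1 + α + m))
            ≤ 1 * s ^ (-(1 + α + m)) :=
              mul_le_mul e0 e2 (Real.rpow_nonneg hst.le _) zero_le_one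
          _ = s ^ (-(1 + α + m)) := one_mul _
      calc K2 * P * (Real.exp (-(c / 2 * (R2 / s))) * (s + t) ^ (-(1 + α + m)))
          ≤ K2 * P * s ^ (-(1 + α + m)) :=
            mul_le_mul_of_nonneg_left hstep (mul_nonneg hK2 hP)
        _ ≤ K2 * (K3 + 1) * P * s ^ (-(1 + α + m)) := by
            nlinarith [mul_nonneg (mul_nonneg (mul_nonneg hK2 hK3) hP)
              (Real.rpow_nonneg hs0.le (-(1 + α + m)))]
  -- final comparison
  rcases le_total ((t / R2) ^ α) ((R2 / t) ^ m) with hmin | hmin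
  · rw [min_eq_left hmin]
    refine boundII.trans (ENNReal.ofReal_le_ofReal ?_)
    have ee : R2 ^ (-m) * (R2 ^ α)⁻¹ = R2 ^ (1 - (1 + α + m)) := by
      rw [← Real.rpow_neg hR2.le α, ← Real.rpow_add hR2]
      congr 1
      ring
    have hid : (4:ℝ) ^ (-(j:ℝ) * m) * ((2:ℝ) ^ j * r) ^ (-γ) * ((t / R2) ^ α)
        = P * R2 ^ (1 - (1 + α + m)) := by
      rw [h4E, hE_pre, Real.div_rpow ht.le hR2.le, hPdef, ← ee, div_eq_mul_inv]
      ring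
    have hY : (0:ℝ) ≤ P * R2 ^ (1 - (1 + α + m)) :=
      mul_nonneg hP (Real.rpow_nonneg hR2.le _)
    have hcoeff : K2 * (K3 + 1) * (1 + 1 / (1 + α + m - 1)) ≤
        (1 + 1 / (1 + α + m - 1)) * (K1 + K2 * (K3 + 1)) + 1 := by
      nlinarith [mul_nonneg hE hK1]
    calc K2 * (K3 + 1) * P * R2 ^ (1 - (1 + α + m)) * (1 + 1 / (1 + α + m - 1))
        = K2 * (K3 + 1) * (1 + 1 / (1 + α + m - 1)) * (P * R2 ^ (1 - (1 + α + m))) := by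
          ring
      _ ≤ ((1 + 1 / (1 + α + m - 1)) * (K1 + K2 * (K3 + 1)) + 1) *
          (P * R2 ^ (1 - (1 + α + m))) := mul_le_mul_of_nonneg_right hcoeff hY
      _ = ((1 + 1 / (1 + α + m - 1)) * (K1 + K2 * (K3 + 1)) + 1) *
          (4:ℝ) ^ (-(j:ℝ) * m) * ((2:ℝ) ^ j * r) ^ (-γ) * ((t / R2) ^ α) := by
          linear_combination (((1 + 1 / (1 + α + m - 1)) * (K1 + K2 * (K3 + 1)) + 1)) *
            hid.symm
  · rw [min_eq_right hmin]
    refine boundI.trans (ENNReal.ofReal_le_ofReal ?_)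
    have e5 : R2 ^ (-m) * R2 ^ m = 1 := by
      rw [← Real.rpow_add hR2]; simp
    have e6 : t ^ α * t ^ (1 - (1 + α + m)) = (t ^ m)⁻¹ := by
      rw [← Real.rpow_add ht, ← Real.rpow_neg ht.le m]
      congr 1
      ring
    have e7 : (R2 / t) ^ m = R2 ^ m * (t ^ m)⁻¹ := by
      rw [Real.div_rpow hR2.le ht.le, div_eq_mul_inv]
    have hid : (4:ℝ) ^ (-(j:ℝ) * m) * ((2:ℝ) ^ j * r) ^ (-γ) * ((R2 / t) ^ m)
        = P * t ^ (1 - (1 + α + m)) := by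
      rw [h4E, hE_pre, e7, hPdef]
      linear_combination (r ^ (2 * m) * R2 ^ (-(γ / 2)) * (t ^ m)⁻¹) * e5 -
        (r ^ (2 * m) * R2 ^ (-(γ / 2))) * e6
    have hY : (0:ℝ) ≤ P * t ^ (1 - (1 + α + m)) :=
      mul_nonneg hP (Real.rpow_nonneg ht.le _)
    have hcoeff : K1 * (1 + 1 / (1 + α + m - 1)) ≤
        (1 + 1 / (1 + α + m - 1)) * (K1 + K2 * (K3 + 1)) + 1 := by
      nlinarith [mul_nonneg hE (mul_nonneg hK2 (by linarith : (0:ℝ) ≤ K3 + 1))]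
    calc K1 * P * t ^ (1 - (1 + α + m)) * (1 + 1 / (1 + α + m - 1))
        = K1 * (1 + 1 / (1 + α + m - 1)) * (P * t ^ (1 - (1 + α + m))) := by ring
      _ ≤ ((1 + 1 / (1 + α + m - 1)) * (K1 + K2 * (K3 + 1)) + 1) *
          (P * t ^ (1 - (1 + α + m))) := mul_le_mul_of_nonneg_right hcoeff hY
      _ = ((1 + 1 / (1 + α + m - 1)) * (K1 + K2 * (K3 + 1)) + 1) *
          (4:ℝ) ^ (-(j:ℝ) * m) * ((2:ℝ) ^ j * r) ^ (-γ) * ((R2 / t) ^ m) := by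
          linear_combination (((1 + 1 / (1 + α + m - 1)) * (K1 + K2 * (K3 + 1)) + 1)) *
            hid.symm
end
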